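/- arXiv:1805.04182 — 6 statements merged into one kernel-verified Lean document; each statement's English description precedes it below -/
import Mathlib

section
/- For any real square matrix A, the entrywise absolute value of the matrix exponential satisfies |e^A| ≤ e^{ψ(A)} entrywise, where ψ(A) is the matrix obtained from A by replacing each off-diagonal entry with its absolute value and leaving diagonal entries unchanged. -/
noncomputable def entAbs {m n : ℕ} (A : Matrix (Fin m) (Fin n) ℝ) : Matrix (Fin m) (Fin n) ℝ :=
  Matrix.of fun i j => |A i j|

noncomputable def metzlerPart {n : ℕ} (A : Matrix (Fin n) (Fin n) ℝ) : Matrix (Fin n) (Fin n) ℝ :=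
  Matrix.of fun i j => if i = j then A i j else |A i j|

/-!
Shifting by `c = ∑ k, |A k k|` makes `|A + c • 1| ≤ ψ(A) + c • 1` entrywise. Entrywise domination
`|B| ≤ M` passes to all powers and hence, term by term, to the exponential series, while the scalar
shift only multiplies both exponentials by the same factor `Real.exp c > 0`.
-/

open NormedSpace
open scoped Nat

namespace Matrix

variable {ι : Type*} [Fintype ι] [DecidableEq ι]

theorem abs_pow_apply_le_of_abs_le {B M : Matrix ι ι ℝ} (h : ∀ i j, |B i j| ≤ M i j) (m : ℕ)
    (i j : ι) : |(B ^ m) i j| ≤ (M ^ m) i j := by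
  induction m generalizing j with
  | zero => by_cases hij : i = j <;> simp [hij]
  | succ m ih =>
    rw [pow_succ, pow_succ, mul_apply, mul_apply]
    refine (Finset.abs_sum_le_sum_abs _ _).trans (Finset.sum_le_sum fun k _ => ?_)
    rw [abs_mul]
    exact mul_le_mul (ih k) (h k j) (abs_nonneg _) ((abs_nonneg _).trans (ih k))

theorem hasSum_exp_apply (B : Matrix ι ι ℝ) (i j : ι) :
    HasSum (fun m : ℕ => (m !⁻¹ : ℝ) * (B ^ m) i j) (exp B i j) := by
  let := Matrix.linftyOpNormedRing (n := ι) (α := ℝ)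
  let := Matrix.linftyOpNormedAlgebra (n := ι) (R := ℝ) (α := ℝ)
  exact Pi.hasSum.mp (Pi.hasSum.mp (exp_series_hasSum_exp' (𝕂 := ℝ) B) i) j

theorem abs_exp_apply_le_of_abs_le {B M : Matrix ι ι ℝ} (h : ∀ i j, |B i j| ≤ M i j)
    (i j : ι) : |exp B i j| ≤ exp M i j := by
  have term_le (m : ℕ) : |(m !⁻¹ : ℝ) * (B ^ m) i j| ≤ (m !⁻¹ : ℝ) * (M ^ m) i j := by
    rw [abs_mul, abs_of_nonneg (by positivity)]
    exact mul_le_mul_of_nonneg_left (abs_pow_apply_le_of_abs_le h m i j) (by positivity)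
  refine abs_le'.mpr ⟨?_, ?_⟩
  · exact hasSum_le (fun m => (le_abs_self _).trans (term_le m))
      (hasSum_exp_apply B i j) (hasSum_exp_apply M i j)
  · exact hasSum_le (fun m => (neg_le_abs _).trans (term_le m))
      (hasSum_exp_apply B i j).neg (hasSum_exp_apply M i j)

theorem exp_add_smul_one (B : Matrix ι ι ℝ) (c : ℝ) :
    exp (B + c • (1 : Matrix ι ι ℝ)) = Real.exp c • exp B := by
  have exp_algebraMap : exp (algebraMap ℝ (Matrix ι ι ℝ) c) = algebraMap ℝ _ (Real.exp c) := by
    let := Matrix.linftyOpNormedRing (n := ι) (α := ℝ)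
    let := Matrix.linftyOpNormedAlgebra (n := ι) (R := ℝ) (α := ℝ)
    exact Real.exp_eq_exp_ℝ ▸ (algebraMap_exp_comm c).symm
  rw [← Algebra.algebraMap_eq_smul_one, Matrix.exp_add_of_commute _ _ (Algebra.commutes c B).symm,
    exp_algebraMap, ← Algebra.commutes, Algebra.smul_def]

end Matrix

open Matrix

theorem abs_add_smul_one_apply_le_metzlerPart {n : ℕ} (A : Matrix (Fin n) (Fin n) ℝ) {c : ℝ}
    (hc : ∀ k, -c ≤ A k k) (i j : Fin n) :
    |(A + c • (1 : Matrix (Fin n) (Fin n) ℝ)) i j| ≤ (metzlerPart A + c • 1) i j := by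
  rcases eq_or_ne i j with rfl | hij
  · simp [metzlerPart, abs_of_nonneg (neg_le_iff_add_nonneg.mp (hc i))]
  · simp [metzlerPart, hij]

theorem abs_exp_le_exp_metzlerPart {n : ℕ} (A : Matrix (Fin n) (Fin n) ℝ) :
    ∀ i j, entAbs (NormedSpace.exp A) i j ≤ NormedSpace.exp (metzlerPart A) i j := by
  intro i j
  have hc (k : Fin n) : -∑ l, |A l l| ≤ A k k :=
    (neg_le_neg (Finset.single_le_sum (fun l _ => abs_nonneg (A l l)) (Finset.mem_univ k))).trans
      (neg_abs_le _)
  have key := abs_exp_apply_le_of_abs_le (abs_add_smul_one_apply_le_metzlerPart A hc) i j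
  rw [exp_add_smul_one, exp_add_smul_one, Matrix.smul_apply, Matrix.smul_apply, smul_eq_mul,
    smul_eq_mul, abs_mul, abs_of_pos (Real.exp_pos _)] at key
  exact le_of_mul_le_mul_left key (Real.exp_pos _)
end

section
/- For any real square matrix A, if ψ(A) is Hurwitz (all eigenvalues have negative real part), then A is Hurwitz. -/
def Hurwitz {n : ℕ} (A : Matrix (Fin n) (Fin n) ℝ) : Prop :=
  ∀ μ ∈ spectrum ℂ (A.map (Complex.ofReal)), μ.re < 0

/-!
For small `t > 0` the matrix `1 + tA` is entrywise dominated in absolute value by the nonnegative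
matrix `1 + tψ(A)`, so Gelfand's formula gives `ρ(1 + tA) ≤ ρ(1 + tψ(A))`. An eigenvalue `μ` of
`A` with `Re μ ≥ 0` forces `ρ(1 + tA) ≥ |1 + tμ| ≥ 1`, whereas `|1 + tν| < 1` for small `t` at each
of the finitely many eigenvalues `ν` of `ψ(A)`, all with `Re ν < 0`; hence `ρ(1 + tψ(A)) < 1`.
-/

open Filter Topology
open scoped ENNReal NNReal

-- Spectral radii do not depend on the norm; this one only makes matrices a Banach algebra.
attribute [local instance] Matrix.linftyOpNormedRing Matrix.linftyOpNormedAlgebra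

lemma eventually_one_add_mul_nonneg (a : ℝ) : ∀ᶠ t : ℝ in 𝓝[>] 0, 0 ≤ 1 + t * a := by
  refine nhdsWithin_le_nhds (((tendsto_id.mul_const a).const_add 1).eventually_const_le ?_)
  simp

lemma Complex.eventually_norm_one_add_mul_lt_one {z : ℂ} (hz : z.re < 0) :
    ∀ᶠ t : ℝ in 𝓝[>] 0, ‖1 + t * z‖ < 1 := by
  have hsmall : ∀ᶠ t : ℝ in 𝓝[>] 0, t * ‖z‖ ^ 2 < -2 * z.re := by
    refine nhdsWithin_le_nhds ((tendsto_id.mul_const (‖z‖ ^ 2)).eventually_lt_const ?_)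
    linarith [zero_mul (‖z‖ ^ 2)]
  filter_upwards [hsmall, self_mem_nhdsWithin] with t ht (htpos : 0 < t)
  have hsq : ‖1 + t * z‖ ^ 2 = 1 + t * (2 * z.re + t * ‖z‖ ^ 2) := by
    simp only [Complex.sq_norm, Complex.normSq_apply, Complex.add_re, Complex.add_im,
      Complex.mul_re, Complex.mul_im, Complex.ofReal_re, Complex.ofReal_im, Complex.one_re,
      Complex.one_im]
    ring
  have : ‖1 + t * z‖ ^ 2 < 1 ^ 2 := by nlinarith
  exact lt_of_pow_lt_pow_left₀ 2 zero_le_one this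

section BanachAlgebra

variable {A : Type*} [NormedRing A] [NormedAlgebra ℂ A] [CompleteSpace A] [Nontrivial A]

lemma spectrum.one_add_smul_eq_image (a : A) (c : ℂ) :
    spectrum ℂ (1 + c • a) = (fun z => 1 + c * z) '' spectrum ℂ a := by
  have := spectrum.map_polynomial_aeval a (1 + Polynomial.C c * Polynomial.X)
  simp only [map_add, map_one, map_mul, Polynomial.aeval_C, Polynomial.aeval_X] at this
  simpa [Algebra.smul_def] using this

lemma eventually_spectralRadius_one_add_smul_lt_one {a : A} (hfin : (spectrum ℂ a).Finite)
    (ha : ∀ z ∈ spectrum ℂ a, z.re < 0) :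
    ∀ᶠ t : ℝ in 𝓝[>] 0, spectralRadius ℂ (1 + (t : ℂ) • a) < 1 := by
  filter_upwards [hfin.eventually_all.2 fun z hz =>
    Complex.eventually_norm_one_add_mul_lt_one (ha z hz)] with t ht
  refine spectrum.spectralRadius_lt_of_forall_lt _ fun w hw => ?_
  rw [spectrum.one_add_smul_eq_image] at hw
  obtain ⟨z, hz, rfl⟩ := hw
  exact_mod_cast ht z hz

end BanachAlgebra

lemma Matrix.map_ofReal_one_add_smul {ι : Type*} [DecidableEq ι] (B : Matrix ι ι ℝ) (t : ℝ) :
    (1 + t • B).map Complex.ofReal = 1 + (t : ℂ) • B.map Complex.ofReal := by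
  ext i j
  by_cases hij : i = j <;> simp [hij]

namespace Matrix

variable {ι : Type*} [Fintype ι] [DecidableEq ι]

lemma norm_pow_apply_le {R : Type*} [NormedRing R] [NormOneClass R] {X : Matrix ι ι R}
    {N : Matrix ι ι ℝ} (h : ∀ i j, ‖X i j‖ ≤ N i j) (k : ℕ) (i j : ι) :
    ‖(X ^ k) i j‖ ≤ (N ^ k) i j := by
  induction k generalizing i j with
  | zero => by_cases hij : i = j <;> simp [hij]
  | succ k ih =>
    rw [pow_succ, pow_succ, mul_apply, mul_apply]
    refine (norm_sum_le _ _).trans (Finset.sum_le_sum fun l _ => ?_)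
    exact (norm_mul_le _ _).trans
      (mul_le_mul (ih i l) (h l j) (norm_nonneg _) ((norm_nonneg _).trans (ih i l)))

lemma spectralRadius_le_of_norm_apply_le {X : Matrix ι ι ℂ} {N : Matrix ι ι ℝ}
    (h : ∀ i j, ‖X i j‖ ≤ N i j) :
    spectralRadius ℂ X ≤ spectralRadius ℂ (N.map Complex.ofReal) := by
  have hpow (k : ℕ) : ‖X ^ k‖₊ ≤ ‖N.map Complex.ofReal ^ k‖₊ := by
    have hmap : N.map Complex.ofReal ^ k = (N ^ k).map Complex.ofReal :=
      (N.map_pow Complex.ofRealHom k).symm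
    rw [hmap, linfty_opNNNorm_def, linfty_opNNNorm_def]
    gcongr with i _ j _
    rw [← NNReal.coe_le_coe, coe_nnnorm, coe_nnnorm, map_apply, Complex.norm_real,
      Real.norm_eq_abs]
    exact (norm_pow_apply_le h k i j).trans (le_abs_self _)
  refine le_of_tendsto_of_tendsto' (spectrum.pow_nnnorm_pow_one_div_tendsto_nhds_spectralRadius X)
    (spectrum.pow_nnnorm_pow_one_div_tendsto_nhds_spectralRadius _) fun k => ?_
  gcongr
  exact hpow k

end Matrix

lemma abs_one_add_smul_apply_le_metzlerPart {n : ℕ} {A : Matrix (Fin n) (Fin n) ℝ} {t : ℝ}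
    (ht : 0 ≤ t) (hdiag : ∀ i, 0 ≤ 1 + t * A i i) (i j : Fin n) :
    |(1 + t • A) i j| ≤ (1 + t • metzlerPart A) i j := by
  by_cases hij : i = j
  · subst hij
    simpa [metzlerPart] using (abs_of_nonneg (hdiag i)).le
  · simp [metzlerPart, Matrix.one_apply_ne hij, hij, abs_mul, abs_of_nonneg ht]

theorem hurwitz_of_metzlerPart_hurwitz {n : ℕ} (A : Matrix (Fin n) (Fin n) ℝ)
    (h : Hurwitz (metzlerPart A)) : Hurwitz A := by
  intro μ hμ
  by_contra! hre
  have : Nonempty (Fin n) := by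
    by_contra hn
    rw [not_nonempty_iff] at hn
    simp [spectrum.of_subsingleton] at hμ
  obtain ⟨t, ht, hdiag, hρ⟩ : ∃ t : ℝ, 0 < t ∧ (∀ i, 0 ≤ 1 + t * A i i) ∧
      spectralRadius ℂ (1 + (t : ℂ) • (metzlerPart A).map Complex.ofReal) < 1 :=
    (eventually_mem_nhdsWithin.and
      ((eventually_all.2 fun i => eventually_one_add_mul_nonneg (A i i)).and
        (eventually_spectralRadius_one_add_smul_lt_one (Matrix.finite_spectrum _)
          (a := (metzlerPart A).map Complex.ofReal) h))).exists
  have hmem : 1 + (t : ℂ) * μ ∈ spectrum ℂ (1 + (t : ℂ) • A.map Complex.ofReal) := by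
    rw [spectrum.one_add_smul_eq_image]
    exact ⟨μ, hμ, rfl⟩
  have hnorm : (1 : ℝ) ≤ ‖1 + (t : ℂ) * μ‖ := by
    refine le_trans ?_ (Complex.re_le_norm _)
    simpa using mul_nonneg ht.le hre
  refine lt_irrefl (1 : ℝ≥0∞) ?_
  calc (1 : ℝ≥0∞) ≤ ‖1 + (t : ℂ) * μ‖₊ := by exact_mod_cast hnorm
    _ ≤ spectralRadius ℂ (1 + (t : ℂ) • A.map Complex.ofReal) := le_iSup₂ (α := ℝ≥0∞) _ hmem
    _ ≤ spectralRadius ℂ (1 + (t : ℂ) • (metzlerPart A).map Complex.ofReal) := by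
      rw [← Matrix.map_ofReal_one_add_smul, ← Matrix.map_ofReal_one_add_smul]
      refine Matrix.spectralRadius_le_of_norm_apply_le fun i j => ?_
      rw [Matrix.map_apply, Complex.norm_real, Real.norm_eq_abs]
      exact abs_one_add_smul_apply_le_metzlerPart ht.le hdiag i j
    _ < 1 := hρ
end

section
/- Let A be a real square matrix and P a real square matrix with nonnegative entries. If ψ(A) + P is Hurwitz, then ψ(A) is Hurwitz. -/
/-!
Let `μ` be an eigenvalue of the Metzler matrix `M = ψ(A)` with eigenvector `v`, and `w = |v|`
entrywise. Shifting `M` by a multiple of `1` to make it nonnegative and applying the triangle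
inequality gives `Re μ • w ≤ M w ≤ (M + P) w`, i.e. `(s • 1 - B) w ≤ 0` for `B = M + P` and
`s = Re μ`.

If `B` is Metzler and `s • 1 - B` is invertible for all `s ≥ 0`, then `(s • 1 - B)⁻¹ ≥ 0` for
all `s ≥ 0`. For large `s` this is the Neumann series of `(s + c)⁻¹ (B + c • 1)`. Downwards,
`(X - r • 1)⁻¹ = (1 - r X⁻¹)⁻¹ X⁻¹` is nonnegative as soon as `X⁻¹` is and `r ‖X⁻¹‖ < 1`, and the
resolvent is bounded on compact intervals, so nonnegativity descends in steps of a fixed length.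
So `s = Re μ ≥ 0` would force `w ≤ 0`, hence `v = 0`.
-/

open Filter Set

namespace Matrix

section Nonneg

variable {l m n : Type*}

def IsNonneg (X : Matrix m n ℝ) : Prop := ∀ i j, 0 ≤ X i j

def IsMetzler (X : Matrix n n ℝ) : Prop := ∀ i j, i ≠ j → 0 ≤ X i j

theorem IsNonneg.smul {X : Matrix m n ℝ} (hX : X.IsNonneg) {c : ℝ} (hc : 0 ≤ c) :
    (c • X).IsNonneg :=
  fun i j => mul_nonneg hc (hX i j)

theorem IsMetzler.add_isNonneg {X Y : Matrix m m ℝ} (hX : X.IsMetzler) (hY : Y.IsNonneg) :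
    (X + Y).IsMetzler :=
  fun i j hij => add_nonneg (hX i j hij) (hY i j)

theorem isNonneg_one [DecidableEq m] : (1 : Matrix m m ℝ).IsNonneg :=
  fun i j => by rw [one_apply]; positivity

variable [Fintype m]

theorem IsNonneg.mul {X : Matrix l m ℝ} {Y : Matrix m n ℝ} (hX : X.IsNonneg) (hY : Y.IsNonneg) :
    (X * Y).IsNonneg :=
  fun i j => Finset.sum_nonneg fun k _ => mul_nonneg (hX i k) (hY k j)

theorem IsNonneg.pow [DecidableEq m] {X : Matrix m m ℝ} (hX : X.IsNonneg) (k : ℕ) :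
    (X ^ k).IsNonneg := by
  induction k with
  | zero => intro i j; rw [pow_zero, one_apply]; positivity
  | succ k ih => rw [pow_succ]; exact ih.mul hX

theorem IsNonneg.mulVec_mono {X : Matrix l m ℝ} (hX : X.IsNonneg) {u v : m → ℝ} (huv : u ≤ v) :
    X *ᵥ u ≤ X *ᵥ v :=
  fun i => Finset.sum_le_sum fun j _ => mul_le_mul_of_nonneg_left (huv j) (hX i j)

theorem IsNonneg.nonpos_of_mulVec_nonpos [DecidableEq m] {X : Matrix m m ℝ} (hX : IsUnit X.det)
    (hXinv : X⁻¹.IsNonneg) {w : m → ℝ} (hw : X *ᵥ w ≤ 0) : w ≤ 0 := by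
  have := hXinv.mulVec_mono hw
  rwa [mulVec_mulVec, nonsing_inv_mul _ hX, one_mulVec, mulVec_zero] at this

theorem IsMetzler.exists_isNonneg_add_smul_one [DecidableEq m] {X : Matrix m m ℝ}
    (hX : X.IsMetzler) : ∃ c : ℝ, (X + c • 1).IsNonneg := by
  refine ⟨∑ k, |X k k|, fun i j => ?_⟩
  rcases eq_or_ne i j with rfl | hij
  · have : |X i i| ≤ ∑ k, |X k k| :=
      Finset.single_le_sum (f := fun k => |X k k|) (fun _ _ => abs_nonneg _) (Finset.mem_univ i)
    simp only [add_apply, smul_apply, one_apply_eq, smul_eq_mul, mul_one]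
    linarith [neg_abs_le (X i i)]
  · simpa [one_apply_ne hij] using hX i j hij

end Nonneg

section Norm

attribute [local instance] Matrix.linftyOpNormedRing Matrix.linftyOpNormedAlgebra

variable {n : Type*} [Fintype n] [DecidableEq n]

theorem IsNonneg.inv_one_sub {E : Matrix n n ℝ} (hE : E.IsNonneg) (hE1 : ‖E‖ < 1) :
    (1 - E)⁻¹.IsNonneg := by
  intro i j
  rw [inv_eq_left_inv (geom_series_mul_neg E hE1)]
  have hsum := (summable_geometric_of_norm_lt_one hE1).hasSum
  exact (Pi.hasSum.mp (Pi.hasSum.mp hsum i) j).nonneg fun k => hE.pow k i j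

theorem IsNonneg.inv_sub {X Y : Matrix n n ℝ} (hX : IsUnit X.det) (hXinv : X⁻¹.IsNonneg)
    (hY : Y.IsNonneg) (hXY : ‖X⁻¹ * Y‖ < 1) : (X - Y)⁻¹.IsNonneg := by
  have hsplit : X - Y = X * (1 - X⁻¹ * Y) := by
    rw [mul_sub, mul_one, ← mul_assoc, mul_nonsing_inv _ hX, one_mul]
  rw [hsplit, mul_inv_rev]
  exact ((hXinv.mul hY).inv_one_sub hXY).mul hXinv

theorem IsMetzler.eventually_isNonneg_inv_smul_one_sub {B : Matrix n n ℝ} (hB : B.IsMetzler) :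
    ∀ᶠ s : ℝ in atTop, ((s • 1 - B)⁻¹).IsNonneg := by
  obtain ⟨c, hN⟩ := hB.exists_isNonneg_add_smul_one
  filter_upwards [eventually_gt_atTop (‖B + c • 1‖ - c)] with s hs
  have hsc : 0 < s + c := by linarith [norm_nonneg (B + c • 1)]
  have hleft : ((s + c)⁻¹ • 1 : Matrix n n ℝ) * ((s + c) • 1) = 1 := by
    rw [smul_mul_smul, one_mul, inv_mul_cancel₀ hsc.ne', one_smul]
  rw [show s • 1 - B = (s + c) • 1 - (B + c • 1) by module]
  refine IsNonneg.inv_sub (isUnit_det_of_left_inverse hleft) ?_ hN ?_ <;>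
    rw [inv_eq_left_inv hleft]
  · exact isNonneg_one.smul (by positivity)
  · rw [smul_mul_assoc, one_mul, norm_smul, Real.norm_of_nonneg (by positivity),
      inv_mul_lt_iff₀ hsc, mul_one]
    linarith

theorem IsMetzler.isNonneg_inv_smul_one_sub {B : Matrix n n ℝ} (hB : B.IsMetzler) {a : ℝ}
    (hU : ∀ s, a ≤ s → IsUnit (s • 1 - B).det) {s : ℝ} (hs : a ≤ s) :
    ((s • 1 - B)⁻¹).IsNonneg := by
  obtain ⟨T₀, hT₀⟩ := eventually_atTop.1 hB.eventually_isNonneg_inv_smul_one_sub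
  set T := max a T₀
  have hcont : ContinuousOn (fun s : ℝ => (s • (1 : Matrix n n ℝ) - B)⁻¹) (Icc a T) := fun s hs =>
    ((continuousAt_matrix_inv _ (NormedRing.inverse_continuousAt (hU s hs.1).unit)).comp
      (f := fun s : ℝ => s • (1 : Matrix n n ℝ) - B) (by fun_prop)).continuousWithinAt
  obtain ⟨K, hK⟩ := isCompact_Icc.exists_bound_of_continuousOn hcont
  set δ := (|K| + 1)⁻¹
  have hδ : 0 < δ := by positivity
  have hδK : δ * K < 1 := by
    rw [inv_mul_lt_iff₀ (by positivity), mul_one]; linarith [le_abs_self K]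
  have hstep : ∀ k : ℕ, ∀ s, a ≤ s → T - k * δ ≤ s → ((s • 1 - B)⁻¹).IsNonneg := by
    intro k
    induction k with
    | zero =>
      intro s _ hs
      have hTs : T ≤ s := by simpa using hs
      exact hT₀ s ((le_max_right a T₀).trans hTs)
    | succ k ih =>
      intro s has hs
      rcases le_or_gt (T - k * δ) s with hle | hlt
      · exact ih s has hle
      set s₀ := T - k * δ
      have hs₀ : s₀ ∈ Icc a T := ⟨has.trans hlt.le, by simp only [s₀]; nlinarith⟩
      have hsplit : s • 1 - B = (s₀ • 1 - B) - (s₀ - s) • 1 := by module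
      rw [hsplit]
      refine IsNonneg.inv_sub (hU s₀ hs₀.1) (ih s₀ hs₀.1 le_rfl)
        (isNonneg_one.smul (by linarith)) ?_
      rw [mul_smul_comm, mul_one, norm_smul, Real.norm_of_nonneg (by linarith)]
      calc (s₀ - s) * ‖(s₀ • 1 - B)⁻¹‖ ≤ δ * K := by
            gcongr
            · push_cast at hs; linarith
            · exact hK s₀ hs₀
        _ < 1 := hδK
  obtain ⟨k, hk⟩ := exists_nat_ge ((T - a) / δ)
  exact hstep k s hs (by rw [div_le_iff₀ hδ] at hk; linarith)

end Norm

section Eigen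

variable {n : Type*} [Fintype n]

theorem exists_mulVec_eq_smul_of_mem_spectrum [DecidableEq n] {K : Type*} [Field K]
    {A : Matrix n n K} {μ : K} (hμ : μ ∈ spectrum K A) : ∃ v ≠ 0, A *ᵥ v = μ • v := by
  rw [← spectrum_toLin', ← Module.End.hasEigenvalue_iff_mem_spectrum] at hμ
  obtain ⟨v, hv⟩ := hμ.exists_hasEigenvector
  exact ⟨v, hv.2, by rw [← toLin'_apply, hv.apply_eq_smul]⟩

theorem IsNonneg.norm_smul_le_mulVec_norm {N : Matrix n n ℝ} (hN : N.IsNonneg) {v : n → ℂ}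
    {μ : ℂ} (hv : N.map Complex.ofReal *ᵥ v = μ • v) :
    ‖μ‖ • (fun i => ‖v i‖) ≤ N *ᵥ fun i => ‖v i‖ := by
  intro i
  calc ‖μ‖ * ‖v i‖ = ‖∑ j, (N i j : ℂ) * v j‖ := by
        rw [← norm_mul, ← smul_eq_mul, ← Pi.smul_apply, ← hv]; rfl
    _ ≤ ∑ j, ‖(N i j : ℂ) * v j‖ := norm_sum_le _ _
    _ = (N *ᵥ fun i => ‖v i‖) i := by
        simp only [norm_mul, Complex.norm_real, Real.norm_of_nonneg (hN _ _)]; rfl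

theorem IsMetzler.re_smul_le_mulVec_norm [DecidableEq n] {M : Matrix n n ℝ} (hM : M.IsMetzler)
    {v : n → ℂ} {μ : ℂ} (hv : M.map Complex.ofReal *ᵥ v = μ • v) :
    μ.re • (fun i => ‖v i‖) ≤ M *ᵥ fun i => ‖v i‖ := by
  obtain ⟨c, hN⟩ := hM.exists_isNonneg_add_smul_one
  have hmap : (M + c • 1).map Complex.ofReal = M.map Complex.ofReal + (c : ℂ) • 1 := by
    ext i j; by_cases hij : i = j <;> simp [hij]
  have hNv : (M + c • 1).map Complex.ofReal *ᵥ v = (μ + c) • v := by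
    rw [hmap, add_mulVec, hv, smul_mulVec, one_mulVec, add_smul]
  intro i
  have hNi := hN.norm_smul_le_mulVec_norm hNv i
  simp only [add_mulVec, smul_mulVec, one_mulVec, Pi.add_apply, Pi.smul_apply, smul_eq_mul]
    at hNi ⊢
  have hre : μ.re + c ≤ ‖μ + c‖ := by simpa using Complex.re_le_norm (μ + c)
  linarith [mul_le_mul_of_nonneg_right hre (norm_nonneg (v i))]

end Eigen

end Matrix

open Matrix

theorem isMetzler_metzlerPart {n : ℕ} (A : Matrix (Fin n) (Fin n) ℝ) : (metzlerPart A).IsMetzler :=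
  fun i j hij => by simp only [metzlerPart, of_apply, if_neg hij]; exact abs_nonneg _

theorem Hurwitz.isUnit_det_smul_one_sub {n : ℕ} {B : Matrix (Fin n) (Fin n) ℝ} (hB : Hurwitz B)
    {s : ℝ} (hs : 0 ≤ s) : IsUnit (s • 1 - B).det := by
  by_contra hdet
  have hmap : algebraMap ℂ _ (s : ℂ) - B.map Complex.ofReal = (s • 1 - B).map Complex.ofReal := by
    ext i j; simp [algebraMap_matrix_apply, one_apply, apply_ite]
  have hmem : (s : ℂ) ∈ spectrum ℂ (B.map Complex.ofReal) := by
    have hdet_map : ((s • 1 - B).map Complex.ofReal).det = ((s • 1 - B).det : ℂ) :=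
      (Complex.ofRealHom.map_det _).symm
    rwa [spectrum.mem_iff, hmap, isUnit_iff_isUnit_det, hdet_map, isUnit_iff_ne_zero,
      Complex.ofReal_ne_zero, ← isUnit_iff_ne_zero]
  exact (hB _ hmem).not_ge (by simpa using hs)

theorem metzlerPart_hurwitz_of_add_nonneg_hurwitz {n : ℕ}
    (A P : Matrix (Fin n) (Fin n) ℝ) (hP : ∀ i j, 0 ≤ P i j)
    (h : Hurwitz (metzlerPart A + P)) : Hurwitz (metzlerPart A) := by
  intro μ hμ
  by_contra! hre
  obtain ⟨v, hv0, hv⟩ := exists_mulVec_eq_smul_of_mem_spectrum hμ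
  set w : Fin n → ℝ := fun i => ‖v i‖
  have hw : 0 ≤ w := fun i => norm_nonneg _
  set B := metzlerPart A + P
  have hBw : μ.re • w ≤ B *ᵥ w := calc
    μ.re • w ≤ metzlerPart A *ᵥ w := (isMetzler_metzlerPart A).re_smul_le_mulVec_norm hv
    _ ≤ B *ᵥ w := by
      rw [add_mulVec]
      exact le_add_of_nonneg_right (by simpa using IsNonneg.mulVec_mono hP hw)
  have hR : ((μ.re • 1 - B)⁻¹).IsNonneg :=
    ((isMetzler_metzlerPart A).add_isNonneg hP).isNonneg_inv_smul_one_sub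
      (fun s hs => h.isUnit_det_smul_one_sub hs) hre
  have hw0 : w ≤ 0 := hR.nonpos_of_mulVec_nonpos (h.isUnit_det_smul_one_sub hre) (by
    rw [sub_mulVec, smul_mulVec, one_mulVec]; exact sub_nonpos.mpr hBw)
  exact hv0 (funext fun i => norm_eq_zero.mp (le_antisymm (hw0 i) (hw i)))
end

section
/- Let F ∈ ℝ^{n×m}, H : [t₀,t₁] → ℝ^{n×n_w} be a bounded measurable matrix function, and let c_z ∈ ℝ^m, p_z ∈ ℝ₊^m, and c_w, p_w : [t₀,t₁] → ℝ^{n_w} with p_w(τ) ≥ 0 be bounded measurable. Define the set 𝕀 = {F z + ∫_{t₀}^{t₁} H(τ) w(τ) dτ : z ∈ [c_z − p_z, c_z + p_z], w measurable with w(τ) ∈ [c_w(τ) − p_w(τ), c_w(τ) + p_w(τ)] for all τ}. Let c = F c_z + ∫_{t₀}^{t₁} H(τ) c_w(τ) dτ and p = |F| p_z + ∫_{t₀}^{t₁} |H(τ)| p_w(τ) dτ. Then [c − p, c + p] is the tightest box (interval of ℝⁿ) containing 𝕀: 𝕀 ⊆ [c − p, c + p], and every box containing 𝕀 contains [c − p,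 c + p]. -/
open MeasureTheory Set

lemma integrableOn_of_bdd {t₀ t₁ : ℝ} {g : ℝ → ℝ} (hg : Measurable g)
    {C : ℝ} (hC : ∀ τ ∈ Set.Icc t₀ t₁, |g τ| ≤ C) :
    MeasureTheory.IntegrableOn g (Set.Ioc t₀ t₁) := by
  apply MeasureTheory.Integrable.mono' (MeasureTheory.integrable_const C)
    hg.aestronglyMeasurable.restrict
  filter_upwards [MeasureTheory.ae_restrict_mem measurableSet_Ioc] with τ hτ
  exact hC τ (Set.Ioc_subset_Icc_self hτ)

lemma integrableOn_pi {k : ℕ} {t₀ t₁ : ℝ} {f : ℝ → Fin k → ℝ}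
    (hmeas : ∀ i, Measurable fun τ => f τ i)
    {C : ℝ} (hC : ∀ τ ∈ Set.Icc t₀ t₁, ∀ i, |f τ i| ≤ C) :
    MeasureTheory.IntegrableOn f (Set.Ioc t₀ t₁) := by
  apply MeasureTheory.Integrable.mono' (MeasureTheory.integrable_const (max C 0))
    (Measurable.aestronglyMeasurable (by exact measurable_pi_iff.2 hmeas)).restrict
  filter_upwards [MeasureTheory.ae_restrict_mem measurableSet_Ioc] with τ hτ
  rw [pi_norm_le_iff_of_nonneg (le_max_right _ _)]
  exact fun i => le_trans (hC τ (Set.Ioc_subset_Icc_self hτ) i) (le_max_left _ _)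

lemma interval_integral_apply {k : ℕ} {t₀ t₁ : ℝ} (ht : t₀ ≤ t₁) {f : ℝ → Fin k → ℝ}
    (hf : MeasureTheory.IntegrableOn f (Set.Ioc t₀ t₁)) (i : Fin k) :
    (∫ τ in t₀..t₁, f τ) i = ∫ τ in Set.Ioc t₀ t₁, f τ i := by
  rw [intervalIntegral.integral_of_le ht]
  exact ((ContinuousLinearMap.proj (R := ℝ) (φ := fun _ : Fin k => ℝ) i).integral_comp_comm
    hf).symm

lemma abs_sum_mul_le {k : ℕ} (h v : Fin k → ℝ) {Ch Cv : ℝ} (hh : ∀ j, |h j| ≤ Ch)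
    (hv : ∀ j, |v j| ≤ Cv) : |∑ j, h j * v j| ≤ k * (|Ch| * |Cv|) := by
  calc |∑ j, h j * v j| ≤ ∑ j, |h j * v j| := Finset.abs_sum_le_sum_abs _ _
    _ ≤ ∑ _j : Fin k, |Ch| * |Cv| := by
        refine Finset.sum_le_sum fun j _ => ?_
        rw [abs_mul]
        exact mul_le_mul ((hh j).trans (le_abs_self _)) ((hv j).trans (le_abs_self _))
          (abs_nonneg _) (abs_nonneg _)
    _ = k * (|Ch| * |Cv|) := by simp [Finset.sum_const, mul_comm]

lemma comp_integrableOn {nw : ℕ} {t₀ t₁ : ℝ} {h v : ℝ → Fin nw → ℝ}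
    (hh : ∀ j, Measurable fun τ => h τ j) (hv : ∀ j, Measurable fun τ => v τ j)
    {Ch Cv : ℝ} (hCh : ∀ τ ∈ Set.Icc t₀ t₁, ∀ j, |h τ j| ≤ Ch)
    (hCv : ∀ τ ∈ Set.Icc t₀ t₁, ∀ j, |v τ j| ≤ Cv) :
    MeasureTheory.IntegrableOn (fun τ => ∑ j, h τ j * v τ j) (Set.Ioc t₀ t₁) := by
  refine integrableOn_of_bdd (Finset.measurable_sum _ fun j _ => (hh j).mul (hv j))
    (C := nw * (|Ch| * |Cv|)) fun τ hτ => ?_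
  exact abs_sum_mul_le _ _ (hCh τ hτ) (hCv τ hτ)

lemma mulVec_integrableOn {n nw : ℕ} {t₀ t₁ : ℝ} {H : ℝ → Matrix (Fin n) (Fin nw) ℝ}
    {v : ℝ → Fin nw → ℝ}
    (hH : ∀ i j, Measurable fun τ => H τ i j) (hv : ∀ j, Measurable fun τ => v τ j)
    {CH Cv : ℝ} (hCH : ∀ τ ∈ Set.Icc t₀ t₁, ∀ i j, |H τ i j| ≤ CH)
    (hCv : ∀ τ ∈ Set.Icc t₀ t₁, ∀ j, |v τ j| ≤ Cv) :
    MeasureTheory.IntegrableOn (fun τ => (H τ).mulVec (v τ)) (Set.Ioc t₀ t₁) := by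
  refine integrableOn_pi (fun i => ?_) (C := nw * (|CH| * |Cv|)) (fun τ hτ i => ?_)
  · simpa [Matrix.mulVec, dotProduct] using
      Finset.measurable_sum Finset.univ fun j _ => (hH i j).mul (hv j)
  · simpa [Matrix.mulVec, dotProduct] using
      abs_sum_mul_le (fun j => H τ i j) (fun j => v τ j) (hCH τ hτ i) (hCv τ hτ)

lemma mulVec_comp_integral {n nw : ℕ} {t₀ t₁ : ℝ} (ht : t₀ ≤ t₁)
    {H : ℝ → Matrix (Fin n) (Fin nw) ℝ} {v : ℝ → Fin nw → ℝ}
    (hH : ∀ i j, Measurable fun τ => H τ i j) (hv : ∀ j, Measurable fun τ => v τ j)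
    {CH Cv : ℝ} (hCH : ∀ τ ∈ Set.Icc t₀ t₁, ∀ i j, |H τ i j| ≤ CH)
    (hCv : ∀ τ ∈ Set.Icc t₀ t₁, ∀ j, |v τ j| ≤ Cv) (i : Fin n) :
    (∫ τ in t₀..t₁, (H τ).mulVec (v τ)) i
      = ∫ τ in Set.Ioc t₀ t₁, ∑ j, H τ i j * v τ j := by
  rw [interval_integral_apply ht (mulVec_integrableOn hH hv hCH hCv) i]
  simp [Matrix.mulVec, dotProduct]

/-- The box `[a, b] = {x : a ≤ x ≤ b}` in `ℝⁿ` (componentwise). -/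
def box {n : ℕ} (a b : Fin n → ℝ) : Set (Fin n → ℝ) := {x | ∀ i, a i ≤ x i ∧ x i ≤ b i}

theorem tightest_interval {n m nw : ℕ} (t₀ t₁ : ℝ) (ht : t₀ ≤ t₁)
    (F : Matrix (Fin n) (Fin m) ℝ) (H : ℝ → Matrix (Fin n) (Fin nw) ℝ)
    (hHmeas : ∀ i j, Measurable fun τ => H τ i j)
    (hHbdd : ∃ C, ∀ τ ∈ Set.Icc t₀ t₁, ∀ i j, |H τ i j| ≤ C)
    (cz : Fin m → ℝ) (pz : Fin m → ℝ) (hpz : ∀ i, 0 ≤ pz i)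
    (cw pw : ℝ → Fin nw → ℝ)
    (hcwmeas : ∀ i, Measurable fun τ => cw τ i) (hpwmeas : ∀ i, Measurable fun τ => pw τ i)
    (hcwbdd : ∃ C, ∀ τ ∈ Set.Icc t₀ t₁, ∀ i, |cw τ i| ≤ C)
    (hpwbdd : ∃ C, ∀ τ ∈ Set.Icc t₀ t₁, ∀ i, |pw τ i| ≤ C)
    (hpw : ∀ τ ∈ Set.Icc t₀ t₁, ∀ i, 0 ≤ pw τ i) :
    (({x | ∃ z : Fin m → ℝ, ∃ w : ℝ → Fin nw → ℝ,
        z ∈ box (cz - pz) (cz + pz) ∧ (∀ i, Measurable fun τ => w τ i) ∧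
        (∀ τ ∈ Set.Icc t₀ t₁, w τ ∈ box (cw τ - pw τ) (cw τ + pw τ)) ∧
        x = F.mulVec z + ∫ τ in t₀..t₁, (H τ).mulVec (w τ)} : Set (Fin n → ℝ)) ⊆
      box
        ((F.mulVec cz + ∫ τ in t₀..t₁, (H τ).mulVec (cw τ)) -
          ((entAbs F).mulVec pz + ∫ τ in t₀..t₁, (entAbs (H τ)).mulVec (pw τ)))
        ((F.mulVec cz + ∫ τ in t₀..t₁, (H τ).mulVec (cw τ)) +
          ((entAbs F).mulVec pz + ∫ τ in t₀..t₁, (entAbs (H τ)).mulVec (pw τ)))) ∧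
    ∀ a b : Fin n → ℝ,
      ({x | ∃ z : Fin m → ℝ, ∃ w : ℝ → Fin nw → ℝ,
        z ∈ box (cz - pz) (cz + pz) ∧ (∀ i, Measurable fun τ => w τ i) ∧
        (∀ τ ∈ Set.Icc t₀ t₁, w τ ∈ box (cw τ - pw τ) (cw τ + pw τ)) ∧
        x = F.mulVec z + ∫ τ in t₀..t₁, (H τ).mulVec (w τ)} : Set (Fin n → ℝ)) ⊆ box a b →
      box
        ((F.mulVec cz + ∫ τ in t₀..t₁, (H τ).mulVec (cw τ)) -
          ((entAbs F).mulVec pz + ∫ τ in t₀..t₁, (entAbs (H τ)).mulVec (pw τ)))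
        ((F.mulVec cz + ∫ τ in t₀..t₁, (H τ).mulVec (cw τ)) +
          ((entAbs F).mulVec pz + ∫ τ in t₀..t₁, (entAbs (H τ)).mulVec (pw τ)))
        ⊆ box a b := by
  obtain ⟨CH, hCH⟩ := hHbdd
  obtain ⟨Ccw, hCcw⟩ := hcwbdd
  obtain ⟨Cpw, hCpw⟩ := hpwbdd
  have hAmeas : ∀ i j, Measurable fun τ => entAbs (H τ) i j := fun i j => (hHmeas i j).abs
  have hCHabs : ∀ τ ∈ Set.Icc t₀ t₁, ∀ i j, |entAbs (H τ) i j| ≤ CH := fun τ hτ i j => by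
    simpa [entAbs, abs_abs] using hCH τ hτ i j
  -- component formulas for the three integrals
  have hc_comp : ∀ i, (∫ τ in t₀..t₁, (H τ).mulVec (cw τ)) i
      = ∫ τ in Set.Ioc t₀ t₁, ∑ j, H τ i j * cw τ j :=
    fun i => mulVec_comp_integral ht hHmeas hcwmeas hCH hCcw i
  have hp_comp : ∀ i, (∫ τ in t₀..t₁, (entAbs (H τ)).mulVec (pw τ)) i
      = ∫ τ in Set.Ioc t₀ t₁, ∑ j, |H τ i j| * pw τ j := fun i => by
    have := mulVec_comp_integral ht hAmeas hpwmeas hCHabs hCpw i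
    simpa [entAbs] using this
  have hIc : ∀ i, MeasureTheory.IntegrableOn (fun τ => ∑ j, H τ i j * cw τ j)
      (Set.Ioc t₀ t₁) :=
    fun i => comp_integrableOn (fun j => hHmeas i j) hcwmeas (fun τ hτ => hCH τ hτ i) hCcw
  have hIp : ∀ i, MeasureTheory.IntegrableOn (fun τ => ∑ j, |H τ i j| * pw τ j)
      (Set.Ioc t₀ t₁) :=
    fun i => comp_integrableOn (fun j => (hHmeas i j).abs) hpwmeas
      (fun τ hτ j => by simpa using hCH τ hτ i j) hCpw
  have hFz : ∀ (z : Fin m → ℝ) i, F.mulVec z i = ∑ j, F i j * z j := fun z i => by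
    simp [Matrix.mulVec, dotProduct]
  have hPp : ∀ i, (entAbs F).mulVec pz i = ∑ j, |F i j| * pz j := fun i => by
    simp [Matrix.mulVec, dotProduct, entAbs]
  constructor
  · rintro x ⟨z, w, hz, hwm, hwbox, rfl⟩ i
    have hwsub : ∀ τ ∈ Set.Icc t₀ t₁, ∀ j, |w τ j - cw τ j| ≤ pw τ j := by
      intro τ hτ j
      have h1 := (hwbox τ hτ j).1
      have h2 := (hwbox τ hτ j).2
      simp only [Pi.sub_apply, Pi.add_apply] at h1 h2
      exact abs_le.2 ⟨by linarith, by linarith⟩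
    have hwbd : ∀ τ ∈ Set.Icc t₀ t₁, ∀ j, |w τ j| ≤ Ccw + Cpw := by
      intro τ hτ j
      have h3 := hwsub τ hτ j
      have h4 := hCcw τ hτ j
      have h5 := (le_abs_self (pw τ j)).trans (hCpw τ hτ j)
      calc |w τ j| = |(w τ j - cw τ j) + cw τ j| := by ring_nf
        _ ≤ |w τ j - cw τ j| + |cw τ j| := abs_add_le _ _
        _ ≤ Ccw + Cpw := by linarith
    have hIw : MeasureTheory.IntegrableOn (fun τ => ∑ j, H τ i j * w τ j) (Set.Ioc t₀ t₁) :=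
      comp_integrableOn (fun j => hHmeas i j) hwm (fun τ hτ => hCH τ hτ i) hwbd
    have hx_comp : (∫ τ in t₀..t₁, (H τ).mulVec (w τ)) i
        = ∫ τ in Set.Ioc t₀ t₁, ∑ j, H τ i j * w τ j :=
      mulVec_comp_integral ht hHmeas hwm hCH hwbd i
    have key : |(∑ j, F i j * z j + ∫ τ in Set.Ioc t₀ t₁, ∑ j, H τ i j * w τ j)
        - (∑ j, F i j * cz j + ∫ τ in Set.Ioc t₀ t₁, ∑ j, H τ i j * cw τ j)|
        ≤ ∑ j, |F i j| * pz j + ∫ τ in Set.Ioc t₀ t₁, ∑ j, |H τ i j| * pw τ j := by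
      have hzsub : ∀ j, |z j - cz j| ≤ pz j := by
        intro j
        have h1 := (hz j).1
        have h2 := (hz j).2
        simp only [Pi.sub_apply, Pi.add_apply] at h1 h2
        exact abs_le.2 ⟨by linarith, by linarith⟩
      have e1 : (∑ j, F i j * z j + ∫ τ in Set.Ioc t₀ t₁, ∑ j, H τ i j * w τ j)
          - (∑ j, F i j * cz j + ∫ τ in Set.Ioc t₀ t₁, ∑ j, H τ i j * cw τ j)
          = ∑ j, F i j * (z j - cz j)
            + ∫ τ in Set.Ioc t₀ t₁, (∑ j, H τ i j * w τ j) - (∑ j, H τ i j * cw τ j) := by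
        rw [MeasureTheory.integral_sub hIw (hIc i), Finset.sum_congr rfl
          (fun j _ => mul_sub (F i j) (z j) (cz j)), Finset.sum_sub_distrib]
        ring
      rw [e1]
      have b1 : |∑ j, F i j * (z j - cz j)| ≤ ∑ j, |F i j| * pz j := by
        calc |∑ j, F i j * (z j - cz j)| ≤ ∑ j, |F i j * (z j - cz j)| :=
              Finset.abs_sum_le_sum_abs _ _
          _ ≤ ∑ j, |F i j| * pz j := by
              refine Finset.sum_le_sum fun j _ => ?_
              rw [abs_mul]
              exact mul_le_mul_of_nonneg_left (hzsub j) (abs_nonneg _)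
      have b2 : |∫ τ in Set.Ioc t₀ t₁, (∑ j, H τ i j * w τ j) - (∑ j, H τ i j * cw τ j)|
          ≤ ∫ τ in Set.Ioc t₀ t₁, ∑ j, |H τ i j| * pw τ j := by
        refine le_trans (by simpa [Real.norm_eq_abs] using MeasureTheory.norm_integral_le_integral_norm (μ := MeasureTheory.volume.restrict (Set.Ioc t₀ t₁)) (fun τ => (∑ j, H τ i j * w τ j) - (∑ j, H τ i j * cw τ j))) ?_
        refine MeasureTheory.setIntegral_mono_on ((hIw.sub (hIc i)).abs) (hIp i)
          measurableSet_Ioc fun τ hτ => ?_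
        calc |(∑ j, H τ i j * w τ j) - (∑ j, H τ i j * cw τ j)|
            = |∑ j, H τ i j * (w τ j - cw τ j)| := by
              rw [Finset.sum_congr rfl (fun j _ => mul_sub (H τ i j) (w τ j) (cw τ j)),
                Finset.sum_sub_distrib]
          _ ≤ ∑ j, |H τ i j * (w τ j - cw τ j)| := Finset.abs_sum_le_sum_abs _ _
          _ ≤ ∑ j, |H τ i j| * pw τ j := by
              refine Finset.sum_le_sum fun j _ => ?_
              rw [abs_mul]
              exact mul_le_mul_of_nonneg_left (hwsub τ (Set.Ioc_subset_Icc_self hτ) j)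
                (abs_nonneg _)
      calc |∑ j, F i j * (z j - cz j)
            + ∫ τ in Set.Ioc t₀ t₁, (∑ j, H τ i j * w τ j) - (∑ j, H τ i j * cw τ j)|
          ≤ |∑ j, F i j * (z j - cz j)|
            + |∫ τ in Set.Ioc t₀ t₁, (∑ j, H τ i j * w τ j) - (∑ j, H τ i j * cw τ j)| :=
            abs_add_le _ _
        _ ≤ _ := add_le_add b1 b2
    have hk := abs_le.1 key
    constructor <;>
      simp only [Pi.sub_apply, Pi.add_apply, hFz, hPp, hc_comp, hp_comp, hx_comp] <;>
      linarith [hk.1, hk.2]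
  · intro a b hsub y hy i
    have hext : ∀ s : ℝ, s = 1 ∨ s = -1 →
        ∃ x, (∃ z : Fin m → ℝ, ∃ w : ℝ → Fin nw → ℝ,
          z ∈ box (cz - pz) (cz + pz) ∧ (∀ i, Measurable fun τ => w τ i) ∧
          (∀ τ ∈ Set.Icc t₀ t₁, w τ ∈ box (cw τ - pw τ) (cw τ + pw τ)) ∧
          x = F.mulVec z + ∫ τ in t₀..t₁, (H τ).mulVec (w τ)) ∧
        x i = (∑ j, F i j * cz j + ∫ τ in Set.Ioc t₀ t₁, ∑ j, H τ i j * cw τ j)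
          + s * (∑ j, |F i j| * pz j + ∫ τ in Set.Ioc t₀ t₁, ∑ j, |H τ i j| * pw τ j) := by
      intro s hs
      have hs1 : |s| = 1 := by rcases hs with rfl | rfl <;> simp
      set zs : Fin m → ℝ := fun j => cz j + s * (if 0 ≤ F i j then pz j else -pz j) with hzs
      set ws : ℝ → Fin nw → ℝ :=
        fun τ j => cw τ j + s * (if 0 ≤ H τ i j then pw τ j else -(pw τ j)) with hws
      have habsz : ∀ j, |s * (if 0 ≤ F i j then pz j else -pz j)| = pz j := fun j => by
        rw [abs_mul, hs1, one_mul]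
        split <;> simp [abs_of_nonneg (hpz j)]
      have habsw : ∀ τ ∈ Set.Icc t₀ t₁, ∀ j,
          |s * (if 0 ≤ H τ i j then pw τ j else -(pw τ j))| = pw τ j := fun τ hτ j => by
        rw [abs_mul, hs1, one_mul]
        split <;> simp [abs_of_nonneg (hpw τ hτ j)]
      have hzbox : zs ∈ box (cz - pz) (cz + pz) := by
        intro j
        have h := abs_le.1 (habsz j).le
        constructor <;> simp only [Pi.sub_apply, Pi.add_apply, hzs] <;>
          linarith [h.1, h.2]
      have hwm : ∀ j, Measurable fun τ => ws τ j := fun j =>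
        (hcwmeas j).add (measurable_const.mul (Measurable.ite
          (measurableSet_le measurable_const (hHmeas i j)) (hpwmeas j) (hpwmeas j).neg))
      have hwbox : ∀ τ ∈ Set.Icc t₀ t₁, ws τ ∈ box (cw τ - pw τ) (cw τ + pw τ) := by
        intro τ hτ j
        have h := abs_le.1 (habsw τ hτ j).le
        constructor <;> simp only [Pi.sub_apply, Pi.add_apply, hws] <;>
          linarith [h.1, h.2]
      have hwbd : ∀ τ ∈ Set.Icc t₀ t₁, ∀ j, |ws τ j| ≤ Ccw + Cpw := by
        intro τ hτ j
        have h := (habsw τ hτ j).le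
        calc |ws τ j| ≤ |cw τ j| + |s * (if 0 ≤ H τ i j then pw τ j else -(pw τ j))| :=
              abs_add_le _ _
          _ ≤ Ccw + Cpw := by
              have := hCcw τ hτ j
              have := (le_abs_self (pw τ j)).trans (hCpw τ hτ j)
              rw [habsw τ hτ j]
              linarith
      refine ⟨F.mulVec zs + ∫ τ in t₀..t₁, (H τ).mulVec (ws τ),
        ⟨zs, ws, hzbox, hwm, hwbox, rfl⟩, ?_⟩
      have hFj : ∀ j, F i j * (if 0 ≤ F i j then pz j else -pz j) = |F i j| * pz j := by
        intro j
        by_cases h : 0 ≤ F i j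
        · simp [h, abs_of_nonneg h]
        · simp only [h, if_false, abs_of_neg (not_le.1 h)]
          ring
      have hHj : ∀ τ j, H τ i j * (if 0 ≤ H τ i j then pw τ j else -(pw τ j))
          = |H τ i j| * pw τ j := by
        intro τ j
        by_cases h : 0 ≤ H τ i j
        · simp [h, abs_of_nonneg h]
        · simp only [h, if_false, abs_of_neg (not_le.1 h)]
          ring
      have hz_comp : F.mulVec zs i = ∑ j, F i j * cz j + s * ∑ j, |F i j| * pz j := by
        rw [hFz]
        calc ∑ j, F i j * zs j
            = ∑ j, (F i j * cz j + s * (F i j * (if 0 ≤ F i j then pz j else -pz j))) :=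
              Finset.sum_congr rfl fun j _ => by simp only [hzs]; ring
          _ = ∑ j, F i j * cz j + s * ∑ j, |F i j| * pz j := by
              rw [Finset.sum_add_distrib, ← Finset.mul_sum]
              congr 1
              exact congrArg (s * ·) (Finset.sum_congr rfl fun j _ => hFj j)
      have hw_comp : (∫ τ in t₀..t₁, (H τ).mulVec (ws τ)) i
          = (∫ τ in Set.Ioc t₀ t₁, ∑ j, H τ i j * cw τ j)
            + s * ∫ τ in Set.Ioc t₀ t₁, ∑ j, |H τ i j| * pw τ j := by
        rw [mulVec_comp_integral ht hHmeas hwm hCH hwbd i]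
        have e : ∀ τ, (∑ j, H τ i j * ws τ j)
            = (∑ j, H τ i j * cw τ j) + s * ∑ j, |H τ i j| * pw τ j := by
          intro τ
          calc ∑ j, H τ i j * ws τ j
              = ∑ j, (H τ i j * cw τ j
                  + s * (H τ i j * (if 0 ≤ H τ i j then pw τ j else -(pw τ j)))) :=
                Finset.sum_congr rfl fun j _ => by simp only [hws]; ring
            _ = _ := by
                rw [Finset.sum_add_distrib, ← Finset.mul_sum]
                congr 1
                exact congrArg (s * ·) (Finset.sum_congr rfl fun j _ => hHj τ j)
        simp only [e]
        rw [MeasureTheory.integral_add (hIc i) ((hIp i).const_mul s),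
          MeasureTheory.integral_const_mul]
      rw [Pi.add_apply, hz_comp, hw_comp]
      ring
    obtain ⟨x1, hx1S, hx1i⟩ := hext 1 (Or.inl rfl)
    obtain ⟨x2, hx2S, hx2i⟩ := hext (-1) (Or.inr rfl)
    have hb := (hsub hx1S i).2
    have ha := (hsub hx2S i).1
    rw [hx1i] at hb
    rw [hx2i] at ha
    have hyi := hy i
    simp only [Pi.sub_apply, Pi.add_apply, hFz, hPp, hc_comp, hp_comp] at hyi
    exact ⟨by linarith [hyi.1], by linarith [hyi.2]⟩
end

section
/- Consider the linear system ẋ(t) = A x(t) + B w(t) with A ∈ ℝ^{n×n}, B ∈ ℝ^{n×n_w}, x(0) ∈ [c_x(0) − p_x(0), c_x(0) + p_x(0)], and bounded measurable input w with w(τ) ∈ [c_w(τ) − p_w(τ), c_w(τ) + p_w(τ)] for all τ ≥ 0. Define c_x(t) = e^{At} c_x(0) + ∫₀ᵗ e^{A(t−τ)} B c_w(τ) dτ and p_x(t) = |e^{At}| p_x(0) + ∫₀ᵗ |e^{A(t−τ)} B| p_w(τ) dτ. Then for every t ≥ 0, every solution x satisfies c_x(t) − p_x(t) ≤ x(t)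 ≤ c_x(t) + p_x(t) componentwise, and [c_x(t) − p_x(t), c_x(t) + p_x(t)] is the tightest box containing the reachable set at time t. -/
/-- Reachable set at time `t` of `ẋ = Ax + Bw` (via the variation-of-constants formula),
over initial states in `[cx0 - px0, cx0 + px0]` and bounded measurable inputs
`w(τ) ∈ [cw(τ) - pw(τ), cw(τ) + pw(τ)]`. -/
noncomputable def reach {n nw : ℕ} (A : Matrix (Fin n) (Fin n) ℝ) (B : Matrix (Fin n) (Fin nw) ℝ)
    (cx0 px0 : Fin n → ℝ) (cw pw : ℝ → Fin nw → ℝ) (t : ℝ) : Set (Fin n → ℝ) :=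
  {x | ∃ x0 : Fin n → ℝ, ∃ w : ℝ → Fin nw → ℝ,
    x0 ∈ box (cx0 - px0) (cx0 + px0) ∧ (∀ i, Measurable fun τ => w τ i) ∧
    (∃ C, ∀ τ, ∀ i, |w τ i| ≤ C) ∧
    (∀ τ, 0 ≤ τ → w τ ∈ box (cw τ - pw τ) (cw τ + pw τ)) ∧
    x = (NormedSpace.exp (t • A)).mulVec x0
        + ∫ τ in (0:ℝ)..t, (NormedSpace.exp ((t - τ) • A)).mulVec (B.mulVec (w τ))}

/-!
By the variation-of-constants formula,
`x(t) - c_x(t) = e^{tA} (x(0) - c_x(0)) + ∫₀ᵗ e^{(t-τ)A} B (w(τ) - c_w(τ)) dτ`,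
and bounding every matrix entry by its absolute value gives `|x(t) - c_x(t)| ≤ p_x(t)`.
The bound is attained coordinatewise: for the `i`-th coordinate, put `x(0)` and `w(τ)` at the
vertices of their boxes selected by the signs of the `i`-th rows of `e^{tA}` and `e^{(t-τ)A} B`.
These inputs are again bounded and measurable, so both `c_x(t) ± p_x(t)` occur as `i`-th
coordinates of reachable states, and every box containing the reachable set contains
`[c_x(t) - p_x(t), c_x(t) + p_x(t)]`.
-/

open MeasureTheory
open scoped Matrix

variable {n m k : ℕ}

lemma mem_box_sub_add_iff {c p x : Fin n → ℝ} :
    x ∈ box (c - p) (c + p) ↔ ∀ i, |x i - c i| ≤ p i := by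
  simp only [box, Set.mem_ofPred_eq, Pi.sub_apply, Pi.add_apply, abs_sub_le_iff]
  refine forall_congr' fun i => ?_
  constructor <;> rintro ⟨h₁, h₂⟩ <;> constructor <;> linarith

lemma box_subset_box_of_attains {S : Set (Fin n → ℝ)} {lo hi a b : Fin n → ℝ}
    (hlo : ∀ i, ∃ x ∈ S, x i = lo i) (hhi : ∀ i, ∃ x ∈ S, x i = hi i) (hS : S ⊆ box a b) :
    box lo hi ⊆ box a b := by
  intro y hy i
  obtain ⟨x, hxS, hx⟩ := hlo i
  obtain ⟨x', hx'S, hx'⟩ := hhi i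
  exact ⟨hx ▸ (hS hxS i).1 |>.trans (hy i).1, (hy i).2.trans (hx' ▸ (hS hx'S i).2)⟩

lemma continuous_entAbs {X : Type*} [TopologicalSpace X] {K : X → Matrix (Fin n) (Fin k) ℝ}
    (hK : Continuous K) : Continuous fun x => entAbs (K x) :=
  continuous_matrix fun i j => (hK.matrix_elem i j).abs

lemma abs_mulVec_apply_le (M : Matrix (Fin n) (Fin k) ℝ) {v p : Fin k → ℝ}
    (h : ∀ j, |v j| ≤ p j) (i : Fin n) : |(M *ᵥ v) i| ≤ (entAbs M *ᵥ p) i := by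
  simp only [Matrix.mulVec, dotProduct, entAbs, Matrix.of_apply]
  refine (Finset.abs_sum_le_sum_abs _ _).trans (Finset.sum_le_sum fun j _ => ?_)
  rw [abs_mul]
  exact mul_le_mul_of_nonneg_left (h j) (abs_nonneg _)

lemma measurable_sign_real : Measurable fun x : ℝ => (SignType.sign x : ℝ) := by
  refine Monotone.measurable fun a b hab => ?_
  rcases lt_trichotomy a 0 with ha | rfl | ha <;> rcases lt_trichotomy b 0 with hb | rfl | hb <;>
    simp [sign_pos, sign_neg, *] <;> linarith

lemma abs_sign_mul_le (x p : ℝ) : |(SignType.sign x : ℝ) * p| ≤ |p| := by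
  rw [abs_mul]
  refine mul_le_of_le_one_left (abs_nonneg _) ?_
  rcases lt_trichotomy x 0 with hx | rfl | hx <;> simp [*]

/-- For `ε = ±1`, the vertex of `[c - p, c + p]` at which the `i`-th coordinate of `M *ᵥ ·` is
extremal. -/
noncomputable def alignedPerturbation (M : Matrix (Fin n) (Fin k) ℝ) (i : Fin n)
    (c p : Fin k → ℝ) (ε : ℝ) : Fin k → ℝ :=
  c + ε • fun j => (SignType.sign (M i j) : ℝ) * p j

lemma mulVec_alignedPerturbation_apply (M : Matrix (Fin n) (Fin k) ℝ) (i : Fin n)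
    (c p : Fin k → ℝ) (ε : ℝ) :
    (M *ᵥ alignedPerturbation M i c p ε) i = (M *ᵥ c) i + ε * (entAbs M *ᵥ p) i := by
  rw [alignedPerturbation, Matrix.mulVec_add, Matrix.mulVec_smul, Pi.add_apply, Pi.smul_apply,
    smul_eq_mul]
  congr 2
  simp only [Matrix.mulVec, dotProduct, entAbs, Matrix.of_apply, ← mul_assoc, self_mul_sign]

lemma abs_alignedPerturbation_sub_le (M : Matrix (Fin n) (Fin k) ℝ) (i : Fin n)
    (c p : Fin k → ℝ) (ε : ℝ) (j : Fin k) :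
    |alignedPerturbation M i c p ε j - c j| ≤ |ε| * |p j| := by
  simp only [alignedPerturbation, Pi.add_apply, Pi.smul_apply, smul_eq_mul, add_sub_cancel_left,
    abs_mul ε]
  exact mul_le_mul_of_nonneg_left (abs_sign_mul_le _ _) (abs_nonneg ε)

lemma alignedPerturbation_mem_box (M : Matrix (Fin n) (Fin k) ℝ) (i : Fin n)
    {c p : Fin k → ℝ} (hp : ∀ j, 0 ≤ p j) {ε : ℝ} (hε : |ε| ≤ 1) :
    alignedPerturbation M i c p ε ∈ box (c - p) (c + p) :=
  mem_box_sub_add_iff.2 fun j => (abs_alignedPerturbation_sub_le M i c p ε j).trans <| by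
    rw [abs_of_nonneg (hp j)]
    exact mul_le_of_le_one_left (hp j) hε

lemma intervalIntegral.eval_integral {ι : Type*} [Fintype ι] {E : ι → Type*}
    [∀ i, NormedAddCommGroup (E i)] [∀ i, NormedSpace ℝ (E i)] [∀ i, CompleteSpace (E i)]
    {μ : Measure ℝ} {f : ℝ → Π i, E i} {a b : ℝ}
    (hf : ∀ i, IntervalIntegrable (f · i) μ a b) (i : ι) :
    (∫ τ in a..b, f τ ∂μ) i = ∫ τ in a..b, f τ i ∂μ := by
  simp only [intervalIntegral, Pi.sub_apply, MeasureTheory.eval_integral fun j => (hf j).1,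
    MeasureTheory.eval_integral fun j => (hf j).2]

structure BoundedMeasurable (w : ℝ → Fin k → ℝ) : Prop where
  measurable : ∀ j, Measurable fun τ => w τ j
  bounded : ∃ C, ∀ τ j, |w τ j| ≤ C

namespace BoundedMeasurable

variable {w c p : ℝ → Fin k → ℝ}

lemma intervalIntegrable_apply (hw : BoundedMeasurable w) (j : Fin k) (a b : ℝ) :
    IntervalIntegrable (fun τ => w τ j) volume a b := by
  obtain ⟨C, hC⟩ := hw.bounded
  refine (intervalIntegrable_const (c := C)).mono_fun (hw.measurable j).aestronglyMeasurable
    (ae_of_all _ fun τ => ?_)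
  simpa only [Real.norm_eq_abs] using (hC τ j).trans (le_abs_self C)

lemma intervalIntegrable_mulVec_apply (hw : BoundedMeasurable w)
    {K : ℝ → Matrix (Fin n) (Fin k) ℝ} (hK : Continuous K) (i : Fin n) (a b : ℝ) :
    IntervalIntegrable (fun τ => (K τ *ᵥ w τ) i) volume a b := by
  have h := IntervalIntegrable.sum Finset.univ fun j _ =>
    (hw.intervalIntegrable_apply j a b).continuousOn_mul (hK.matrix_elem i j).continuousOn
  rwa [Finset.sum_fn] at h

lemma alignedPerturbation (hc : BoundedMeasurable c) (hp : BoundedMeasurable p)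
    {K : ℝ → Matrix (Fin n) (Fin k) ℝ} (hK : Continuous K) (i : Fin n) (ε : ℝ) :
    BoundedMeasurable fun τ => alignedPerturbation (K τ) i (c τ) (p τ) ε where
  measurable j := (hc.measurable j).add (measurable_const.mul
    ((measurable_sign_real.comp (hK.matrix_elem i j).measurable).mul (hp.measurable j)))
  bounded := by
    obtain ⟨Cc, hCc⟩ := hc.bounded
    obtain ⟨Cp, hCp⟩ := hp.bounded
    refine ⟨Cc + |ε| * Cp, fun τ j => ?_⟩
    have h := abs_sub_abs_le_abs_sub (_root_.alignedPerturbation (K τ) i (c τ) (p τ) ε j) (c τ j)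
    have h' := (abs_alignedPerturbation_sub_le (K τ) i (c τ) (p τ) ε j).trans
      (mul_le_mul_of_nonneg_left (hCp τ j) (abs_nonneg ε))
    linarith [hCc τ j]

end BoundedMeasurable

section Kernel

variable {K : ℝ → Matrix (Fin n) (Fin k) ℝ} {w c p : ℝ → Fin k → ℝ}

lemma integral_mulVec_apply (hK : Continuous K) (hw : BoundedMeasurable w) (a b : ℝ)
    (i : Fin n) :
    (∫ τ in a..b, K τ *ᵥ w τ) i = ∫ τ in a..b, (K τ *ᵥ w τ) i :=
  intervalIntegral.eval_integral (fun i => hw.intervalIntegrable_mulVec_apply hK i a b) i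

lemma abs_integral_mulVec_sub_le (hK : Continuous K) {t : ℝ} (ht : 0 ≤ t)
    (hw : BoundedMeasurable w) (hc : BoundedMeasurable c) (hp : BoundedMeasurable p)
    (hwc : ∀ τ ∈ Set.Icc 0 t, ∀ j, |w τ j - c τ j| ≤ p τ j) (i : Fin n) :
    |(∫ τ in 0..t, K τ *ᵥ w τ) i - (∫ τ in 0..t, K τ *ᵥ c τ) i|
      ≤ (∫ τ in 0..t, entAbs (K τ) *ᵥ p τ) i := by
  have hw' := hw.intervalIntegrable_mulVec_apply hK i 0 t
  have hc' := hc.intervalIntegrable_mulVec_apply hK i 0 t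
  rw [integral_mulVec_apply hK hw, integral_mulVec_apply hK hc,
    integral_mulVec_apply (continuous_entAbs hK) hp, ← intervalIntegral.integral_sub hw' hc']
  refine (intervalIntegral.abs_integral_le_integral_abs ht).trans
    (intervalIntegral.integral_mono_on ht (hw'.sub hc').abs
      (hp.intervalIntegrable_mulVec_apply (continuous_entAbs hK) i 0 t) fun τ hτ => ?_)
  rw [← Pi.sub_apply, ← Matrix.mulVec_sub]
  exact abs_mulVec_apply_le _ (hwc τ hτ) i

lemma integral_mulVec_alignedPerturbation_apply (hK : Continuous K) (hc : BoundedMeasurable c)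
    (hp : BoundedMeasurable p) (a b : ℝ) (i : Fin n) (ε : ℝ) :
    (∫ τ in a..b, K τ *ᵥ alignedPerturbation (K τ) i (c τ) (p τ) ε) i
      = (∫ τ in a..b, K τ *ᵥ c τ) i + ε * (∫ τ in a..b, entAbs (K τ) *ᵥ p τ) i := by
  rw [integral_mulVec_apply hK (hc.alignedPerturbation hp hK i ε), integral_mulVec_apply hK hc,
    integral_mulVec_apply (continuous_entAbs hK) hp]
  simp only [mulVec_alignedPerturbation_apply]
  rw [intervalIntegral.integral_add (hc.intervalIntegrable_mulVec_apply hK i a b)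
    ((hp.intervalIntegrable_mulVec_apply (continuous_entAbs hK) i a b).const_mul ε),
    intervalIntegral.integral_const_mul]

lemma abs_response_sub_le (hK : Continuous K) (E : Matrix (Fin n) (Fin m) ℝ)
    {x₀ c₀ p₀ : Fin m → ℝ} (hx₀ : ∀ j, |x₀ j - c₀ j| ≤ p₀ j) {t : ℝ} (ht : 0 ≤ t)
    (hw : BoundedMeasurable w) (hc : BoundedMeasurable c) (hp : BoundedMeasurable p)
    (hwc : ∀ τ ∈ Set.Icc 0 t, ∀ j, |w τ j - c τ j| ≤ p τ j) (i : Fin n) :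
    |(E *ᵥ x₀ + ∫ τ in 0..t, K τ *ᵥ w τ) i - (E *ᵥ c₀ + ∫ τ in 0..t, K τ *ᵥ c τ) i|
      ≤ (entAbs E *ᵥ p₀ + ∫ τ in 0..t, entAbs (K τ) *ᵥ p τ) i := by
  have hE : |(E *ᵥ x₀) i - (E *ᵥ c₀) i| ≤ (entAbs E *ᵥ p₀) i := by
    rw [← Pi.sub_apply, ← Matrix.mulVec_sub]
    exact abs_mulVec_apply_le E hx₀ i
  simp only [Pi.add_apply]
  rw [add_sub_add_comm]
  exact (abs_add_le _ _).trans (add_le_add hE (abs_integral_mulVec_sub_le hK ht hw hc hp hwc i))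

end Kernel

section
-- `Matrix` has no global norm; any of the operator norms induces its product topology.
attribute [local instance] Matrix.linftyOpNormedAddCommGroup Matrix.linftyOpNormedRing
  Matrix.linftyOpNormedAlgebra

lemma Matrix.continuous_exp {𝕂 ι : Type*} [RCLike 𝕂] [Fintype ι] [DecidableEq ι] :
    Continuous (NormedSpace.exp : Matrix ι ι 𝕂 → Matrix ι ι 𝕂) :=
  NormedSpace.exp_continuous

end

section Reach

variable {nw : ℕ} (A : Matrix (Fin n) (Fin n) ℝ) (B : Matrix (Fin n) (Fin nw) ℝ)
  (cx0 px0 : Fin n → ℝ) (cw pw : ℝ → Fin nw → ℝ)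

lemma continuous_exp_sub_smul_mul (t : ℝ) :
    Continuous fun τ : ℝ => NormedSpace.exp ((t - τ) • A) * B :=
  (Matrix.continuous_exp.comp (by fun_prop)).matrix_mul continuous_const

/-- `c_x(t)` -/
noncomputable def stateCenter (t : ℝ) : Fin n → ℝ :=
  (NormedSpace.exp (t • A)).mulVec cx0
    + ∫ τ in (0:ℝ)..t, (NormedSpace.exp ((t - τ) • A)).mulVec (B.mulVec (cw τ))

/-- `p_x(t)` -/
noncomputable def stateRadius (t : ℝ) : Fin n → ℝ :=
  (entAbs (NormedSpace.exp (t • A))).mulVec px0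
    + ∫ τ in (0:ℝ)..t, (entAbs (NormedSpace.exp ((t - τ) • A) * B)).mulVec (pw τ)

variable {A B cx0 px0 cw pw}

theorem reach_subset_box (hcw : BoundedMeasurable cw) (hpw : BoundedMeasurable pw) {t : ℝ}
    (ht : 0 ≤ t) :
    reach A B cx0 px0 cw pw t ⊆ box (stateCenter A B cx0 cw t - stateRadius A B px0 pw t)
      (stateCenter A B cx0 cw t + stateRadius A B px0 pw t) := by
  rintro _ ⟨x₀, w, hx₀, hwm, hwb, hw, rfl⟩
  rw [mem_box_sub_add_iff] at hx₀ ⊢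
  simp only [stateCenter, stateRadius, Matrix.mulVec_mulVec]
  exact abs_response_sub_le (continuous_exp_sub_smul_mul A B t) _ hx₀ ht ⟨hwm, hwb⟩ hcw hpw
    fun τ hτ => mem_box_sub_add_iff.1 (hw τ hτ.1)

theorem exists_mem_reach_apply_eq (hpx0 : ∀ i, 0 ≤ px0 i) (hcw : BoundedMeasurable cw)
    (hpw : BoundedMeasurable pw) (hpw_nonneg : ∀ τ, 0 ≤ τ → ∀ i, 0 ≤ pw τ i) (t : ℝ) (i : Fin n)
    {ε : ℝ} (hε : |ε| ≤ 1) :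
    ∃ x ∈ reach A B cx0 px0 cw pw t,
      x i = stateCenter A B cx0 cw t i + ε * stateRadius A B px0 pw t i := by
  have hK := continuous_exp_sub_smul_mul A B t
  have hw := hcw.alignedPerturbation hpw hK i ε
  refine ⟨_, ⟨alignedPerturbation (NormedSpace.exp (t • A)) i cx0 px0 ε,
    fun τ => alignedPerturbation (NormedSpace.exp ((t - τ) • A) * B) i (cw τ) (pw τ) ε,
    alignedPerturbation_mem_box _ i hpx0 hε,
    hw.measurable, hw.bounded,
    fun τ hτ => alignedPerturbation_mem_box _ i (hpw_nonneg τ hτ) hε, rfl⟩, ?_⟩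
  simp only [stateCenter, stateRadius, Matrix.mulVec_mulVec, Pi.add_apply,
    mulVec_alignedPerturbation_apply, integral_mulVec_alignedPerturbation_apply hK hcw hpw]
  ring

end Reach

theorem tightest_open_loop_estimator {n nw : ℕ}
    (A : Matrix (Fin n) (Fin n) ℝ) (B : Matrix (Fin n) (Fin nw) ℝ)
    (cx0 px0 : Fin n → ℝ) (hpx0 : ∀ i, 0 ≤ px0 i)
    (cw pw : ℝ → Fin nw → ℝ)
    (hcwmeas : ∀ i, Measurable fun τ => cw τ i) (hpwmeas : ∀ i, Measurable fun τ => pw τ i)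
    (hcwbdd : ∃ C, ∀ τ, ∀ i, |cw τ i| ≤ C) (hpwbdd : ∃ C, ∀ τ, ∀ i, |pw τ i| ≤ C)
    (hpw : ∀ τ, 0 ≤ τ → ∀ i, 0 ≤ pw τ i) :
    ∀ t : ℝ, 0 ≤ t →
      (reach A B cx0 px0 cw pw t ⊆
        box
          (((NormedSpace.exp (t • A)).mulVec cx0
              + ∫ τ in (0:ℝ)..t, (NormedSpace.exp ((t - τ) • A)).mulVec (B.mulVec (cw τ))) -
            ((entAbs (NormedSpace.exp (t • A))).mulVec px0
              + ∫ τ in (0:ℝ)..t, (entAbs (NormedSpace.exp ((t - τ) • A) * B)).mulVec (pw τ)))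
          (((NormedSpace.exp (t • A)).mulVec cx0
              + ∫ τ in (0:ℝ)..t, (NormedSpace.exp ((t - τ) • A)).mulVec (B.mulVec (cw τ))) +
            ((entAbs (NormedSpace.exp (t • A))).mulVec px0
              + ∫ τ in (0:ℝ)..t, (entAbs (NormedSpace.exp ((t - τ) • A) * B)).mulVec (pw τ)))) ∧
      ∀ a b : Fin n → ℝ, reach A B cx0 px0 cw pw t ⊆ box a b →
        box
          (((NormedSpace.exp (t • A)).mulVec cx0
              + ∫ τ in (0:ℝ)..t, (NormedSpace.exp ((t - τ) • A)).mulVec (B.mulVec (cw τ))) -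
            ((entAbs (NormedSpace.exp (t • A))).mulVec px0
              + ∫ τ in (0:ℝ)..t, (entAbs (NormedSpace.exp ((t - τ) • A) * B)).mulVec (pw τ)))
          (((NormedSpace.exp (t • A)).mulVec cx0
              + ∫ τ in (0:ℝ)..t, (NormedSpace.exp ((t - τ) • A)).mulVec (B.mulVec (cw τ))) +
            ((entAbs (NormedSpace.exp (t • A))).mulVec px0
              + ∫ τ in (0:ℝ)..t, (entAbs (NormedSpace.exp ((t - τ) • A) * B)).mulVec (pw τ)))
          ⊆ box a b := by
  intro t ht
  have hcw_bm : BoundedMeasurable cw := ⟨hcwmeas, hcwbdd⟩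
  have hpw_bm : BoundedMeasurable pw := ⟨hpwmeas, hpwbdd⟩
  refine ⟨reach_subset_box hcw_bm hpw_bm ht, fun a b hab =>
    box_subset_box_of_attains (fun i => ?lower) (fun i => ?upper) hab⟩
  case lower =>
    obtain ⟨x, hx, hxi⟩ := exists_mem_reach_apply_eq hpx0 hcw_bm hpw_bm hpw t i (ε := -1) (by simp)
    exact ⟨x, hx, by rw [hxi, neg_one_mul, ← sub_eq_add_neg]; rfl⟩
  case upper =>
    obtain ⟨x, hx, hxi⟩ := exists_mem_reach_apply_eq hpx0 hcw_bm hpw_bm hpw t i (ε := 1) (by simp)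
    exact ⟨x, hx, by rw [hxi, one_mul]; rfl⟩
end

section
/- Let T > 0 and define p̂_x : ℝ₊ → ℝ₊ⁿ by p̂_x(t) = p_x(t) for 0 ≤ t < T, and p̂_x(t) = |e^{AT}| p̂_x(t−T) + ∫_{t−T}^{t} |e^{A(t−τ)} B| p_w(τ) dτ for t ≥ T, where p_x(t) = |e^{At}| p_x(0) + ∫₀ᵗ |e^{A(t−τ)} B| p_w(τ) dτ. Then p_x(t) ≤ p̂_x(t) componentwise for all t ≥ 0. -/
/-!
Write `Φ t = |e^{tA}|` and `G t = |e^{tA} B|`. Because `e^{(T+s)A} = e^{TA} e^{sA}` and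
`|MN| ≤ |M| |N|`, on nonnegative vectors `Φ (T + s) ≤ Φ T · Φ s` and `G (T + s) ≤ Φ T · G s`.
Splitting the convolution integral defining `p_x t` at `t - T` therefore gives
`p_x t ≤ Φ T · p_x (t - T) + ∫_{t-T}^t G (t - τ) p_w τ dτ`, the recursion defining `p̂_x`
with `≤` in place of `=`. Since `Φ T` has nonnegative entries, induction over the intervals
`[kT, (k+1)T)` yields `p_x ≤ p̂_x`.
-/

open MeasureTheory NormedSpace Set
open scoped Matrix

section EntAbs

variable {l m n : ℕ}

theorem entAbs_mul_apply_le (M : Matrix (Fin l) (Fin m) ℝ) (N : Matrix (Fin m) (Fin n) ℝ)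
    (i : Fin l) (j : Fin n) : entAbs (M * N) i j ≤ (entAbs M * entAbs N) i j := by
  simp only [entAbs, Matrix.of_apply, Matrix.mul_apply, ← abs_mul]
  exact Finset.abs_sum_le_sum_abs _ _

theorem entAbs_mulVec_mono (M : Matrix (Fin m) (Fin n) ℝ) {v w : Fin n → ℝ} (h : v ≤ w) :
    entAbs M *ᵥ v ≤ entAbs M *ᵥ w := fun i => by
  simp only [Matrix.mulVec, dotProduct]
  exact Finset.sum_le_sum fun j _ => mul_le_mul_of_nonneg_left (h j) (abs_nonneg _)

theorem entAbs_mul_mulVec_le (M : Matrix (Fin l) (Fin m) ℝ) (N : Matrix (Fin m) (Fin n) ℝ)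
    {v : Fin n → ℝ} (hv : 0 ≤ v) : entAbs (M * N) *ᵥ v ≤ entAbs M *ᵥ (entAbs N *ᵥ v) := by
  rw [Matrix.mulVec_mulVec]
  intro i
  simp only [Matrix.mulVec, dotProduct]
  exact Finset.sum_le_sum fun j _ =>
    mul_le_mul_of_nonneg_right (entAbs_mul_apply_le M N i j) (hv j)

theorem Continuous.entAbs {X : Type*} [TopologicalSpace X] {K : X → Matrix (Fin m) (Fin n) ℝ}
    (hK : Continuous K) : Continuous fun x => entAbs (K x) :=
  hK.matrix_map continuous_abs

end EntAbs

section PiIntegral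

variable {ι : Type*} [Fintype ι] {μ : Measure ℝ} {f g : ℝ → ι → ℝ} {a b : ℝ}

theorem intervalIntegrable_pi_iff :
    IntervalIntegrable f μ a b ↔ ∀ i, IntervalIntegrable (f · i) μ a b := by
  simp only [intervalIntegrable_iff, IntegrableOn, integrable_pi_iff]

theorem intervalIntegral_apply (hf : IntervalIntegrable f μ a b) (i : ι) :
    (∫ τ in a..b, f τ ∂μ) i = ∫ τ in a..b, f τ i ∂μ :=
  ((ContinuousLinearMap.proj (R := ℝ) i).intervalIntegral_comp_comm hf).symm

theorem intervalIntegral_mono_on_pi (hab : a ≤ b) (hf : IntervalIntegrable f μ a b)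
    (hg : IntervalIntegrable g μ a b) (h : ∀ τ ∈ Icc a b, f τ ≤ g τ) :
    ∫ τ in a..b, f τ ∂μ ≤ ∫ τ in a..b, g τ ∂μ := fun i => by
  rw [intervalIntegral_apply hf, intervalIntegral_apply hg]
  exact intervalIntegral.integral_mono_on hab (intervalIntegrable_pi_iff.1 hf i)
    (intervalIntegrable_pi_iff.1 hg i) fun τ hτ => h τ hτ i

theorem intervalIntegral_mulVec {κ : Type*} [Fintype κ] (M : Matrix κ ι ℝ)
    (hf : IntervalIntegrable f μ a b) :
    ∫ τ in a..b, M *ᵥ f τ ∂μ = M *ᵥ ∫ τ in a..b, f τ ∂μ :=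
  (Matrix.mulVecLin M).toContinuousLinearMap.intervalIntegral_comp_comm hf

theorem IntervalIntegrable.continuous_mulVec {κ : Type*} [Fintype κ] {K : ℝ → Matrix κ ι ℝ}
    (hf : IntervalIntegrable f μ a b) (hK : Continuous K) :
    IntervalIntegrable (fun τ => K τ *ᵥ f τ) μ a b := by
  refine intervalIntegrable_pi_iff.2 fun i => ?_
  simpa only [Matrix.mulVec, dotProduct, Finset.sum_fn] using IntervalIntegrable.sum Finset.univ
    fun j _ => (intervalIntegrable_pi_iff.1 hf j).continuousOn_mul (hK.matrix_elem i j).continuousOn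

end PiIntegral

theorem intervalIntegrable_of_norm_le {E : Type*} [NormedAddCommGroup E] {μ : Measure ℝ}
    [IsLocallyFiniteMeasure μ] {w : ℝ → E} (hw : AEStronglyMeasurable w μ) {C : ℝ}
    (hC : ∀ τ, ‖w τ‖ ≤ C) (a b : ℝ) : IntervalIntegrable w μ a b :=
  (intervalIntegrable_const (c := C)).mono_fun hw.restrict
    (ae_of_all _ fun τ => (hC τ).trans (le_abs_self C))

theorem forall_nonneg_of_periodic_step {P : ℝ → Prop} {T : ℝ} (hT : 0 < T)
    (hbase : ∀ t ∈ Ico 0 T, P t) (hstep : ∀ t, T ≤ t → P (t - T) → P t) :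
    ∀ t, 0 ≤ t → P t := by
  have hk : ∀ k : ℕ, ∀ t, 0 ≤ t → t < k * T → P t := by
    intro k
    induction k with
    | zero => intro t ht htk; simp only [Nat.cast_zero, zero_mul] at htk; linarith
    | succ k ih =>
      intro t ht htk
      rcases lt_or_ge t T with htT | hTt
      · exact hbase t ⟨ht, htT⟩
      · exact hstep t hTt (ih (t - T) (by linarith) (by push_cast at htk; linarith))
  intro t ht
  obtain ⟨k, hk'⟩ := exists_nat_gt (t / T)
  exact hk k t ht ((div_lt_iff₀ hT).1 hk')

section MatrixExp

variable {m : Type*} [Fintype m] [DecidableEq m] (A : Matrix m m ℝ)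

theorem Matrix.continuous_exp_smul : Continuous fun t : ℝ => exp (t • A) := by
  let _ : NormedRing (Matrix m m ℝ) := Matrix.linftyOpNormedRing
  let _ : NormedAlgebra ℝ (Matrix m m ℝ) := Matrix.linftyOpNormedAlgebra
  let _ : NormedAlgebra ℚ (Matrix m m ℝ) := NormedAlgebra.restrictScalars ℚ ℝ _
  exact exp_continuous.comp (continuous_id.smul continuous_const)

theorem Matrix.exp_add_smul (s t : ℝ) : exp ((s + t) • A) = exp (s • A) * exp (t • A) := by
  rw [add_smul]
  exact Matrix.exp_add_of_commute _ _ (((Commute.refl A).smul_left s).smul_right t)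

end MatrixExp

section LinearSystem

variable {n nw : ℕ} (A : Matrix (Fin n) (Fin n) ℝ)

/-- The paper's `p_x`: a componentwise bound on the state of `ẋ = A x + B u` when
`|x 0| ≤ x₀` and `|u| ≤ w`. -/
noncomputable def stateBound (B : Matrix (Fin n) (Fin nw) ℝ) (x₀ : Fin n → ℝ)
    (w : ℝ → Fin nw → ℝ) (t : ℝ) : Fin n → ℝ :=
  entAbs (exp (t • A)) *ᵥ x₀ + ∫ τ in (0 : ℝ)..t, entAbs (exp ((t - τ) • A) * B) *ᵥ w τ

variable (B : Matrix (Fin n) (Fin nw) ℝ) {w : ℝ → Fin nw → ℝ}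

theorem intervalIntegrable_entAbs_exp_mulVec (hw : ∀ a b, IntervalIntegrable w volume a b)
    (t a b : ℝ) :
    IntervalIntegrable (fun τ => entAbs (exp ((t - τ) • A) * B) *ᵥ w τ) volume a b :=
  (hw a b).continuous_mulVec
    (((Matrix.continuous_exp_smul A).comp (continuous_const.sub continuous_id)).matrix_mul
      continuous_const).entAbs

theorem stateBound_le {x₀ : Fin n → ℝ} (hx₀ : 0 ≤ x₀) (hw₀ : ∀ τ, 0 ≤ w τ)
    (hw : ∀ a b, IntervalIntegrable w volume a b) {T t : ℝ} (hTt : T ≤ t) :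
    stateBound A B x₀ w t ≤ entAbs (exp (T • A)) *ᵥ stateBound A B x₀ w (t - T)
      + ∫ τ in (t - T)..t, entAbs (exp ((t - τ) • A) * B) *ᵥ w τ := by
  have hsplit (u : ℝ) : exp ((t - u) • A) = exp (T • A) * exp ((t - T - u) • A) := by
    rw [← Matrix.exp_add_smul]
    ring_nf
  have hinitial : entAbs (exp (t • A)) *ᵥ x₀
      ≤ entAbs (exp (T • A)) *ᵥ (entAbs (exp ((t - T) • A)) *ᵥ x₀) := by
    have hsplit₀ := hsplit 0
    simp only [sub_zero] at hsplit₀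
    rw [hsplit₀]
    exact entAbs_mul_mulVec_le _ _ hx₀
  have hhistory : ∫ τ in (0 : ℝ)..(t - T), entAbs (exp ((t - τ) • A) * B) *ᵥ w τ
      ≤ entAbs (exp (T • A)) *ᵥ
          ∫ τ in (0 : ℝ)..(t - T), entAbs (exp ((t - T - τ) • A) * B) *ᵥ w τ := by
    have hint := intervalIntegrable_entAbs_exp_mulVec A B hw
    rw [← intervalIntegral_mulVec _ (hint _ _ _)]
    refine intervalIntegral_mono_on_pi (by linarith) (hint _ _ _)
      ((hint _ _ _).continuous_mulVec continuous_const) fun τ _ => ?_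
    rw [hsplit, Matrix.mul_assoc]
    exact entAbs_mul_mulVec_le _ _ (hw₀ τ)
  rw [stateBound, stateBound, Matrix.mulVec_add, ← intervalIntegral.integral_add_adjacent_intervals
    (intervalIntegrable_entAbs_exp_mulVec A B hw t 0 (t - T))
    (intervalIntegrable_entAbs_exp_mulVec A B hw t (t - T) t), ← add_assoc]
  exact add_le_add (add_le_add hinitial hhistory) le_rfl

end LinearSystem

theorem truncated_overapproximation {n nw : ℕ}
    (A : Matrix (Fin n) (Fin n) ℝ) (B : Matrix (Fin n) (Fin nw) ℝ)
    (px0 : Fin n → ℝ) (hpx0 : ∀ i, 0 ≤ px0 i)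
    (pw : ℝ → Fin nw → ℝ) (hpwmeas : ∀ i, Measurable fun τ => pw τ i)
    (hpwbdd : ∃ C, ∀ τ, ∀ i, |pw τ i| ≤ C) (hpw : ∀ τ, ∀ i, 0 ≤ pw τ i)
    (T : ℝ) (hT : 0 < T)
    (px phat : ℝ → Fin n → ℝ)
    (hpx : ∀ t, px t = (entAbs (NormedSpace.exp (t • A))).mulVec px0
        + ∫ τ in (0:ℝ)..t, (entAbs (NormedSpace.exp ((t - τ) • A) * B)).mulVec (pw τ))
    (hphat_lt : ∀ t ∈ Set.Ico (0:ℝ) T, phat t = px t)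
    (hphat_ge : ∀ t, T ≤ t → phat t = (entAbs (NormedSpace.exp (T • A))).mulVec (phat (t - T))
        + ∫ τ in (t - T)..t, (entAbs (NormedSpace.exp ((t - τ) • A) * B)).mulVec (pw τ)) :
    ∀ t : ℝ, 0 ≤ t → ∀ i, px t i ≤ phat t i := by
  obtain ⟨C, hC⟩ := hpwbdd
  have hpw_int (a b : ℝ) : IntervalIntegrable pw volume a b := intervalIntegrable_pi_iff.2
    fun j => intervalIntegrable_of_norm_le (hpwmeas j).aestronglyMeasurable (hC · j) a b
  obtain rfl : px = stateBound A B px0 pw := funext hpx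
  refine forall_nonneg_of_periodic_step (P := fun t => stateBound A B px0 pw t ≤ phat t) hT
    (fun t ht => (hphat_lt t ht).ge) fun t hTt ih => ?_
  rw [hphat_ge t hTt]
  exact (stateBound_le A B hpx0 hpw hpw_int hTt).trans
    (add_le_add (entAbs_mulVec_mono _ ih) le_rfl)
end
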